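/- Let h be a differentiable strictly monotone activation and consider y_i = h(⟨A_i, z⟩ + b_i) for all i. If for every i, ∂L/∂y_i ≠ 0 and h'(⟨A_i,z⟩+b_i) ≠ 0, then the pair of gradients (∂L/∂A, ∂L/∂b) determines z uniquely, i.e., the map z ↦ (∂L/∂A, ∂L/∂b) (for fixed A, b, and upstream loss values) is injective on the set of z consistent with the given ∂L/∂y. -/

import Mathlib

/-! A single output neuron `i` already suffices: its gradients are `(c • z, c)` with
`c = ∂L/∂y_i · h'(⟨A_i, z⟩ + b_i) ≠ 0`, and `z` is recovered by cancelling `c`. -/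

theorem Set.injOn_smul_self_prodMk {R M : Type*} [Semiring R] [IsCancelMulZero R]
    [AddCommMonoid M] [Module R M] [Module.IsTorsionFree R M] (c : M → R) :
    Set.InjOn (fun z => (c z • z, c z)) {z | c z ≠ 0} := by
  intro z₁ hz₁ z₂ _ h
  obtain ⟨hsmul, hc⟩ := Prod.ext_iff.1 h
  dsimp only at hsmul hc
  rw [← hc] at hsmul
  exact smul_right_injective M hz₁ hsmul

theorem stmt13 {Ny Nz : ℕ} (hNy : 1 ≤ Ny)
    (h' : ℝ → ℝ)  -- derivative of the activation
    (A : Fin Ny → Fin Nz → ℝ) (b : Fin Ny → ℝ)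
    (gy : Fin Ny → ℝ)  -- fixed upstream gradient ∂L/∂y
    (hgy : ∀ i, gy i ≠ 0)
    (gradMap : (Fin Nz → ℝ) → (Fin Ny → Fin Nz → ℝ) × (Fin Ny → ℝ))
    (hgrad : ∀ z : Fin Nz → ℝ, gradMap z =
      (fun i m => gy i * h' ((∑ m', A i m' * z m') + b i) * z m,
       fun i => gy i * h' ((∑ m', A i m' * z m') + b i))) :
    Set.InjOn gradMap {z | ∀ i, h' ((∑ m', A i m' * z m') + b i) ≠ 0} := by
  let i : Fin Ny := ⟨0, hNy⟩
  let c : (Fin Nz → ℝ) → ℝ := fun z => gy i * h' ((∑ m', A i m' * z m') + b i)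
  have hneuron : (fun p => (p.1 i, p.2 i)) ∘ gradMap = fun z => (c z • z, c z) := by
    funext z
    simp only [Function.comp_apply, hgrad z, c]
    rfl
  refine Set.InjOn.of_comp (g := fun p => (p.1 i, p.2 i)) ?_
  rw [hneuron]
  exact (Set.injOn_smul_self_prodMk c).mono fun z hz => mul_ne_zero (hgy i) (hz i)
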